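/- Let W^i, W^j be independent standard Brownian motions and K_t(x) = -x/(√(2π)t^{3/2})e^{-x²/(2t)}. There exists a constant C such that for all 0 < θ < u ≤ T, (E[K_{u−θ}(W^i_u − W^j_θ)⁴])^{1/4} ≤ C u^{-1/8} (u−θ)^{-7/8}. -/

import Mathlib

/-!
The law of `W^i_u` is the centred Gaussian of variance `u`, whose density is at most
`(2πu)^{-1/2}`; since `W^j_θ` is independent of `W^i_u`, integrating first in `W^i_u` and
translating gives `E[K_s(W^i_u − W^j_θ)⁴] ≤ (2πu)^{-1/2} ∫ K_s⁴`. The scaling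
`K_s(x) = s⁻¹ K_1(x/√s)` gives `∫ K_s⁴ = s^{-7/2} ∫ K_1⁴`, and fourth roots finish the proof
with `s = u − θ`.
-/

open MeasureTheory ProbabilityTheory Real

/-- The Keller–Segel kernel `K_t(x) = -x/(√(2π) t^{3/2}) e^{-x²/(2t)}`. -/
noncomputable def K (t x : ℝ) : ℝ :=
  -x / (Real.sqrt (2 * Real.pi) * t ^ ((3 : ℝ) / 2)) * Real.exp (-x ^ 2 / (2 * t))

/-- `W` is a Brownian motion with arbitrary initial distribution. -/
def IsBM {Ω : Type} [MeasurableSpace Ω] (P : Measure Ω) (W : ℝ → Ω → ℝ) : Prop :=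
  (∀ ω, Continuous fun t => W t ω) ∧
  (∀ t : ℝ, Measurable (W t)) ∧
  (∀ s t : ℝ, 0 ≤ s → s ≤ t →
    P.map (fun ω => W t ω - W s ω) = gaussianReal 0 (Real.toNNReal (t - s))) ∧
  (∀ n : ℕ, ∀ t : Fin (n + 1) → ℝ, Monotone t → (∀ i, 0 ≤ t i) →
    iIndepFun
      (fun i : Fin n => fun ω => W (t i.succ) ω - W (t i.castSucc) ω) P)

open scoped ENNReal NNReal

lemma gaussianPDFReal_le (m : ℝ) (v : ℝ≥0) (x : ℝ) :
    gaussianPDFReal m v x ≤ (√(2 * π * v))⁻¹ :=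
  mul_le_of_le_one_right (by positivity)
    (exp_le_one_iff.mpr (div_nonpos_of_nonpos_of_nonneg (neg_nonpos.mpr (sq_nonneg _))
      (by positivity)))

lemma gaussianReal_le_smul_volume (m : ℝ) {v : ℝ≥0} (hv : v ≠ 0) :
    gaussianReal m v ≤ ENNReal.ofReal (√(2 * π * v))⁻¹ • volume := by
  rw [gaussianReal_of_var_ne_zero m hv, ← withDensity_const]
  exact withDensity_mono
    (.of_forall fun x => ENNReal.ofReal_le_ofReal (gaussianPDFReal_le m v x))

section IndepDifference

variable {Ω G : Type*} [MeasurableSpace Ω] [AddGroup G] [MeasurableSpace G] [MeasurableAdd G]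
  [MeasurableSub₂ G] {P : Measure Ω} [IsProbabilityMeasure P] {μ : Measure G}
  [μ.IsAddRightInvariant] {X Y : Ω → G}

lemma ProbabilityTheory.IndepFun.lintegral_comp_sub_le (hXY : IndepFun X Y P)
    (hX : Measurable X) (hY : Measurable Y) {M : ℝ≥0∞} (hXμ : P.map X ≤ M • μ)
    {f : G → ℝ≥0∞} (hf : Measurable f) :
    ∫⁻ ω, f (X ω - Y ω) ∂P ≤ M * ∫⁻ x, f x ∂μ := by
  have hprod : P.map (fun ω => (X ω, Y ω)) = (P.map X).prod (P.map Y) :=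
    (indepFun_iff_map_prod_eq_prod_map_map hX.aemeasurable hY.aemeasurable).mp hXY
  have hf_sub : Measurable fun p : G × G => f (p.1 - p.2) := hf.comp measurable_sub
  have hinner (y : G) : ∫⁻ x, f (x - y) ∂(P.map X) ≤ M * ∫⁻ x, f x ∂μ :=
    calc ∫⁻ x, f (x - y) ∂(P.map X)
        ≤ ∫⁻ x, f (x - y) ∂(M • μ) := lintegral_mono' hXμ le_rfl
      _ = M * ∫⁻ x, f x ∂μ := by
        rw [lintegral_smul_measure, lintegral_sub_right_eq_self, smul_eq_mul]
  calc ∫⁻ ω, f (X ω - Y ω) ∂P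
      = ∫⁻ p, f (p.1 - p.2) ∂((P.map X).prod (P.map Y)) := by
        rw [← hprod, lintegral_map hf_sub (hX.prodMk hY)]
    _ = ∫⁻ y, ∫⁻ x, f (x - y) ∂(P.map X) ∂(P.map Y) :=
        lintegral_prod_symm _ hf_sub.aemeasurable
    _ ≤ ∫⁻ _, M * ∫⁻ x, f x ∂μ ∂(P.map Y) := lintegral_mono hinner
    _ = M * ∫⁻ x, f x ∂μ := by
        rw [lintegral_const, Measure.map_apply hY .univ, Set.preimage_univ, measure_univ,
          mul_one]

lemma ProbabilityTheory.IndepFun.integral_comp_sub_le (hXY : IndepFun X Y P)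
    (hX : Measurable X) (hY : Measurable Y) {M : ℝ≥0} (hXμ : P.map X ≤ (M : ℝ≥0∞) • μ)
    {f : G → ℝ} (hf_nonneg : 0 ≤ f) (hf : Measurable f) (hfμ : Integrable f μ) :
    ∫ ω, f (X ω - Y ω) ∂P ≤ M * ∫ x, f x ∂μ := by
  rw [integral_eq_lintegral_of_nonneg_ae (f := fun ω => f (X ω - Y ω))
      (.of_forall fun _ => hf_nonneg _) (hf.comp (hX.sub hY)).aestronglyMeasurable,
    integral_eq_lintegral_of_nonneg_ae (.of_forall hf_nonneg) hf.aestronglyMeasurable,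
    ← ENNReal.coe_toReal M, ← ENNReal.toReal_mul]
  exact ENNReal.toReal_mono (ENNReal.mul_ne_top ENNReal.coe_ne_top hfμ.lintegral_lt_top.ne)
    (hXY.lintegral_comp_sub_le hX hY hXμ hf.ennreal_ofReal)

end IndepDifference

lemma K_eq_inv_mul_K_one {s : ℝ} (hs : 0 < s) (x : ℝ) : K s x = s⁻¹ * K 1 (x / √s) := by
  have hrpow : s ^ ((3 : ℝ) / 2) = s * √s := by
    rw [sqrt_eq_rpow, ← rpow_one_add' hs.le (by norm_num)]
    norm_num
  simp only [K, one_rpow, mul_one, div_pow, sq_sqrt hs.le, hrpow]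
  field_simp

lemma integral_K_pow {s : ℝ} (hs : 0 < s) (n : ℕ) :
    ∫ x, K s x ^ n = s ^ ((1 : ℝ) / 2 - n) * ∫ x, K 1 x ^ n := by
  simp_rw [K_eq_inv_mul_K_one hs, mul_pow]
  rw [integral_const_mul, Measure.integral_comp_div (fun y => K 1 y ^ n),
    abs_of_nonneg (sqrt_nonneg s), smul_eq_mul, ← mul_assoc, sqrt_eq_rpow,
    rpow_sub hs, rpow_natCast]
  ring

lemma integrable_K_one_pow_four : Integrable fun x => K 1 x ^ 4 := by
  refine ((integrable_rpow_mul_exp_neg_mul_sq two_pos (s := 4) (by norm_num)).const_mul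
    (4 * π ^ 2)⁻¹).congr (.of_forall fun x => ?_)
  have hexp : rexp (-x ^ 2 / 2) ^ 4 = rexp (-2 * x ^ 2) := by
    rw [← exp_nat_mul]
    ring_nf
  have h2π : √(2 * π) ^ 4 = (2 * π) ^ 2 := by
    rw [show 4 = 2 * 2 by rfl, pow_mul, sq_sqrt (by positivity)]
  simp only [K, one_rpow, mul_one, mul_pow, div_pow, hexp, h2π]
  rw [show (x : ℝ) ^ (4 : ℝ) = x ^ 4 by norm_cast, Even.neg_pow (by decide)]
  field_simp
  ring

lemma integrable_K_pow_four {s : ℝ} (hs : 0 < s) : Integrable fun x => K s x ^ 4 := by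
  simp_rw [K_eq_inv_mul_K_one hs, mul_pow]
  exact (integrable_K_one_pow_four.comp_div (sqrt_pos.mpr hs).ne').const_mul _

lemma measurable_K (s : ℝ) : Measurable (K s) := by
  unfold K
  fun_prop

lemma integral_K_pow_four_comp_sub_le {Ω : Type*} [MeasurableSpace Ω] {P : Measure Ω}
    [IsProbabilityMeasure P] {X Y : Ω → ℝ} (hXY : IndepFun X Y P) (hX : Measurable X)
    (hY : Measurable Y) {m u : ℝ} (hu : 0 < u) (hX_law : P.map X = gaussianReal m u.toNNReal)
    {s : ℝ} (hs : 0 < s) :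
    ∫ ω, K s (X ω - Y ω) ^ 4 ∂P ≤
      (√(2 * π * u))⁻¹ * (s ^ (-(7 : ℝ) / 2) * ∫ x, K 1 x ^ 4) := by
  have hX_density : P.map X ≤ ((√(2 * π * u))⁻¹.toNNReal : ℝ≥0∞) • volume := by
    have h := gaussianReal_le_smul_volume m (toNNReal_pos.mpr hu).ne'
    rwa [coe_toNNReal u hu.le, ← hX_law] at h
  have h := hXY.integral_comp_sub_le hX hY hX_density (fun x => by positivity)
    ((measurable_K s).pow_const 4) (integrable_K_pow_four hs)
  rwa [coe_toNNReal _ (by positivity), integral_K_pow hs,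
    show (1 : ℝ) / 2 - (4 : ℕ) = -7 / 2 by norm_num] at h

lemma IsBM.map_eq_gaussianReal {Ω : Type} [MeasurableSpace Ω] {P : Measure Ω} {W : ℝ → Ω → ℝ}
    (hW : IsBM P W) (hW0 : ∀ ω, W 0 ω = 0) {t : ℝ} (ht : 0 ≤ t) :
    P.map (W t) = gaussianReal 0 t.toNNReal := by
  simpa [hW0] using hW.2.2.1 0 t le_rfl ht

/-- There is a constant `C` such that for independent standard Brownian motions `W^i, W^j`
and all `0 < θ < u ≤ T`,
`(E[K_{u−θ}(W^i_u − W^j_θ)⁴])^{1/4} ≤ C u^{-1/8} (u−θ)^{-7/8}`. -/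
theorem fourth_moment_kernel_estimate :
    ∃ C : ℝ,
      ∀ (Ω : Type) (m : MeasurableSpace Ω) (P : Measure Ω),
        IsProbabilityMeasure P →
        ∀ (Wi Wj : ℝ → Ω → ℝ), IsBM P Wi → IsBM P Wj →
          (∀ ω, Wi 0 ω = 0) → (∀ ω, Wj 0 ω = 0) →
          Indep (⨆ t : ℝ, MeasurableSpace.comap (Wi t) Real.measurableSpace)
                (⨆ t : ℝ, MeasurableSpace.comap (Wj t) Real.measurableSpace) P →
          ∀ T θ u : ℝ, 0 < θ → θ < u → u ≤ T →
            (∫ ω, (K (u - θ) (Wi u ω - Wj θ ω)) ^ 4 ∂P) ^ ((1 : ℝ) / 4)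
              ≤ C * u ^ (-(1 : ℝ) / 8) * (u - θ) ^ (-(7 : ℝ) / 8) := by
  refine ⟨((√(2 * π))⁻¹ * ∫ x, K 1 x ^ 4) ^ ((1 : ℝ) / 4), ?_⟩
  intro Ω _ P _ Wi Wj hWi hWj hWi0 _ hWiWj T θ u hθ hθu _
  have hu : 0 < u := hθ.trans hθu
  have hs : 0 < u - θ := sub_pos.mpr hθu
  have hindep : IndepFun (Wi u) (Wj θ) P :=
    indep_of_indep_of_le_right
      (indep_of_indep_of_le_left hWiWj (le_iSup (fun t => MeasurableSpace.comap (Wi t) _) u))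
      (le_iSup (fun t => MeasurableSpace.comap (Wj t) _) θ)
  have hbound := integral_K_pow_four_comp_sub_le hindep (hWi.2.1 u) (hWj.2.1 θ) hu
    (hWi.map_eq_gaussianReal hWi0 hu.le) hs
  have hA : 0 ≤ (√(2 * π))⁻¹ * ∫ x, K 1 x ^ 4 :=
    mul_nonneg (by positivity) (integral_nonneg fun x => by positivity)
  calc (∫ ω, K (u - θ) (Wi u ω - Wj θ ω) ^ 4 ∂P) ^ ((1 : ℝ) / 4)
      ≤ (((√(2 * π))⁻¹ * ∫ x, K 1 x ^ 4) * u ^ (-(1 : ℝ) / 2) * (u - θ) ^ (-(7 : ℝ) / 2))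
          ^ ((1 : ℝ) / 4) := by
        refine rpow_le_rpow (integral_nonneg fun ω => by positivity) (hbound.trans_eq ?_)
          (by norm_num)
        rw [sqrt_mul (by positivity), mul_inv, sqrt_eq_rpow u, ← rpow_neg hu.le]
        ring_nf
    _ = _ := by
      rw [mul_rpow (by positivity) (by positivity), mul_rpow hA (by positivity),
        ← rpow_mul hu.le, ← rpow_mul hs.le]
      norm_num
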